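/- In the abstract setting (U Hilbert, a continuous coercive symmetric bilinear form, pⱼ ∈ U*, Zⱼ ∈ ℝ, the hard-constraint set nonempty), let u^δ be the penalised solution and u the hard-constrained solution. Then there is a constant C > 0, independent of δ, such that ‖u − u^δ‖_U ≤ C√δ for all δ > 0. -/

import Mathlib

/-!
Since `a u` vanishes on the common kernel of the finitely many constraints `pⱼ`, it is a
combination `a u = ∑ⱼ cⱼ pⱼ`. Testing the penalised equation with `e = u - u^δ` and using
`pⱼ u = Zⱼ` gives `a u^δ e = (1/δ) ∑ⱼ (pⱼ e)²`, so coercivity yields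
`α ‖e‖² ≤ a e e = ∑ⱼ (cⱼ pⱼ e - (pⱼ e)² / δ)`, and each summand is at most `cⱼ² δ / 4`.
-/

open Finset

theorem exists_eq_sum_mul_of_forall_eq_zero {𝕜 E ι : Type*} [Field 𝕜] [AddCommGroup E]
    [Module 𝕜 E] [Fintype ι] (p : ι → E →ₗ[𝕜] 𝕜) (f : E →ₗ[𝕜] 𝕜)
    (hf : ∀ v, (∀ j, p j v = 0) → f v = 0) :
    ∃ c : ι → 𝕜, ∀ v, f v = ∑ j, c j * p j v := by
  have hker : ⨅ j, LinearMap.ker (p j) ≤ LinearMap.ker f := fun v hv ↦ by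
    simp only [Submodule.mem_iInf, LinearMap.mem_ker] at hv ⊢
    exact hf v hv
  obtain ⟨c, hc⟩ := (Submodule.mem_span_range_iff_exists_fun 𝕜).1 (mem_span_of_iInf_ker_le_ker hker)
  exact ⟨c, fun v ↦ by simp [← hc]⟩

theorem mul_sub_sq_div_le {δ : ℝ} (hδ : 0 < δ) (c t : ℝ) : c * t - t ^ 2 / δ ≤ c ^ 2 / 4 * δ := by
  have hgap : c ^ 2 / 4 * δ - (c * t - t ^ 2 / δ) = (t - c * δ / 2) ^ 2 / δ := by
    field_simp
    ring
  linarith [div_nonneg (sq_nonneg (t - c * δ / 2)) hδ.le]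

section PenaltyError

variable {U ι : Type*} [NormedAddCommGroup U] [NormedSpace ℝ U] [Fintype ι]
  (a : U →ₗ[ℝ] U →ₗ[ℝ] ℝ) (p : ι → U →ₗ[ℝ] ℝ) (Z : ι → ℝ) {δ : ℝ} {w u : U}

theorem penalty_apply_sub_eq
    (hpen : ∀ v, a w v + (1 / δ) * ∑ j, p j w * p j v = (1 / δ) * ∑ j, Z j * p j v)
    (hu : ∀ j, p j u = Z j) :
    a w (u - w) = (1 / δ) * ∑ j, p j (u - w) ^ 2 := by
  have hsum : ∑ j, Z j * p j (u - w) - ∑ j, p j w * p j (u - w) = ∑ j, p j (u - w) ^ 2 := by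
    rw [← sum_sub_distrib]
    refine sum_congr rfl fun j _ ↦ ?_
    rw [← hu j, map_sub]
    ring
  rw [← hsum, mul_sub, ← hpen]
  ring

theorem penalty_error_sq_le {α : ℝ} (hcoercive : ∀ v : U, α * ‖v‖ ^ 2 ≤ a v v) (hδ : 0 < δ)
    (hpen : ∀ v, a w v + (1 / δ) * ∑ j, p j w * p j v = (1 / δ) * ∑ j, Z j * p j v)
    (hu : ∀ j, p j u = Z j) (c : ι → ℝ) (hc : ∀ v, a u v = ∑ j, c j * p j v) :
    α * ‖u - w‖ ^ 2 ≤ (∑ j, c j ^ 2) / 4 * δ := by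
  have henergy : a (u - w) (u - w) = ∑ j, (c j * p j (u - w) - p j (u - w) ^ 2 / δ) := by
    rw [map_sub a u w, LinearMap.sub_apply, hc, penalty_apply_sub_eq a p Z hpen hu, sum_sub_distrib,
      mul_sum]
    simp only [one_div_mul_eq_div]
  calc α * ‖u - w‖ ^ 2 ≤ a (u - w) (u - w) := hcoercive _
    _ = ∑ j, (c j * p j (u - w) - p j (u - w) ^ 2 / δ) := henergy
    _ ≤ ∑ j, c j ^ 2 / 4 * δ := sum_le_sum fun j _ ↦ mul_sub_sq_div_le hδ _ _
    _ = (∑ j, c j ^ 2) / 4 * δ := by rw [← sum_mul, ← sum_div]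

end PenaltyError

theorem penalty_convergence_rate_general
    {U : Type*} [NormedAddCommGroup U] [InnerProductSpace ℝ U]
    (a : U →ₗ[ℝ] U →ₗ[ℝ] ℝ)
    (α : ℝ) (hα : 0 < α) (hcoercive : ∀ u : U, α * ‖u‖ ^ 2 ≤ a u u)
    (L : ℕ) (p : Fin L → U →L[ℝ] ℝ) (Z : Fin L → ℝ)
    (uδ : ℝ → U)
    (hpen : ∀ δ : ℝ, 0 < δ → ∀ v : U,
      a (uδ δ) v + (1 / δ) * ∑ j, p j (uδ δ) * p j v = (1 / δ) * ∑ j, Z j * p j v)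
    (u : U) (hu : ∀ j, p j u = Z j)
    (hhard : ∀ v : U, (∀ j, p j v = 0) → a u v = 0) :
    ∃ C > 0, ∀ δ : ℝ, 0 < δ → ‖u - uδ δ‖ ≤ C * Real.sqrt δ := by
  obtain ⟨c, hc⟩ := exists_eq_sum_mul_of_forall_eq_zero (fun j ↦ (p j : U →ₗ[ℝ] ℝ)) (a u) hhard
  set K := (∑ j, c j ^ 2) / 4 / α
  refine ⟨Real.sqrt (K + 1), by positivity, fun δ hδ ↦ ?_⟩
  have herr := penalty_error_sq_le a (fun j ↦ (p j : U →ₗ[ℝ] ℝ)) Z hcoercive hδ (hpen δ hδ) hu c hc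
  rw [← Real.sqrt_mul (by positivity), Real.le_sqrt (norm_nonneg _) (by positivity)]
  calc ‖u - uδ δ‖ ^ 2 ≤ K * δ := by rw [div_mul_eq_mul_div, le_div_iff₀ hα]; linarith
    _ ≤ (K + 1) * δ := by linarith

/-- Penalty convergence rate: if u^δ solves the penalised problem for each δ > 0 and
u solves the hard-constrained problem, then ‖u − u^δ‖ ≤ C√δ with C independent of δ. -/
theorem penalty_convergence_rate
    {U : Type*} [NormedAddCommGroup U] [InnerProductSpace ℝ U] [CompleteSpace U]
    (a : U →ₗ[ℝ] U →ₗ[ℝ] ℝ)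
    (M : ℝ) (hbound : ∀ u v : U, |a u v| ≤ M * ‖u‖ * ‖v‖)
    (α : ℝ) (hα : 0 < α) (hcoercive : ∀ u : U, α * ‖u‖ ^ 2 ≤ a u u)
    (hsymm : ∀ u v : U, a u v = a v u)
    (L : ℕ) (p : Fin L → U →L[ℝ] ℝ) (Z : Fin L → ℝ)
    (uδ : ℝ → U)
    (hpen : ∀ δ : ℝ, 0 < δ → ∀ v : U,
      a (uδ δ) v + (1 / δ) * ∑ j, p j (uδ δ) * p j v = (1 / δ) * ∑ j, Z j * p j v)
    (u : U) (hu : ∀ j, p j u = Z j)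
    (hhard : ∀ v : U, (∀ j, p j v = 0) → a u v = 0) :
    ∃ C > 0, ∀ δ : ℝ, 0 < δ → ‖u - uδ δ‖ ≤ C * Real.sqrt δ :=
  penalty_convergence_rate_general a α hα hcoercive L p Z uδ hpen u hu hhard
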